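/- arXiv:1003.6006 — 2 statements merged into one kernel-verified Lean document; each statement's English description precedes it below -/
import Mathlib

section
/- For every L > 0 and ε > 0 there exists A > 0 such that: whenever N ∈ ℕ, a₁,…,a_N ∈ [0,1] with ∑_{k=1}^N a_k ≥ A, and ν_N is the convolution m₁ ∗ ⋯ ∗ m_N of the probability measures m_k = (1/2)δ₀ + (1/2)δ_{-a_k} on ℝ, then ν_N([-L, 0]) ≤ ε. -/
/-!
Chernoff bound. The exponential moment `∫ eˣ` is multiplicative under convolution, and the
two-point measure `½δ₀ + ½δ₋ₐ` with `a ∈ [0, 1]` has exponential moment `(1 + e⁻ᵃ)/2 ≤ e^(-a/4)`.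
Hence `ν_N` has exponential moment at most `exp (-(∑ aₖ)/4)`, and Markov's inequality gives
`ν_N [-L, 0] ≤ ν_N [-L, ∞) ≤ exp (L - (∑ aₖ)/4)`.
-/

open MeasureTheory

/-- Convolution of two measures on `ℝ`. -/
noncomputable def convM (μ ν : Measure ℝ) : Measure ℝ :=
  Measure.map (fun p : ℝ × ℝ => p.1 + p.2) (μ.prod ν)

open scoped ENNReal

noncomputable def expMoment (μ : Measure ℝ) : ℝ≥0∞ :=
  ∫⁻ x, ENNReal.ofReal (Real.exp x) ∂μ

lemma measurable_ofReal_exp : Measurable fun x : ℝ => ENNReal.ofReal (Real.exp x) :=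
  Real.measurable_exp.ennreal_ofReal

lemma expMoment_convM (μ ν : Measure ℝ) [SFinite μ] [SFinite ν] :
    expMoment (convM μ ν) = expMoment μ * expMoment ν := by
  have hadd : Measurable fun p : ℝ × ℝ => p.1 + p.2 := measurable_fst.add measurable_snd
  rw [expMoment, convM, lintegral_map measurable_ofReal_exp hadd,
    lintegral_prod (fun p : ℝ × ℝ => ENNReal.ofReal (Real.exp (p.1 + p.2)))
      (measurable_ofReal_exp.comp hadd).aemeasurable]
  simp_rw [Real.exp_add, ENNReal.ofReal_mul (Real.exp_nonneg _),
    lintegral_const_mul _ measurable_ofReal_exp, lintegral_mul_const _ measurable_ofReal_exp]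
  rfl

lemma sFinite_foldr_convM (l : List (Measure ℝ)) (hl : ∀ μ ∈ l, SFinite μ) :
    SFinite (l.foldr convM (Measure.dirac 0)) := by
  induction l with
  | nil => exact inferInstanceAs (SFinite (Measure.dirac (0 : ℝ)))
  | cons μ l ih =>
    have := hl μ List.mem_cons_self
    have := ih fun ν hν => hl ν (List.mem_cons_of_mem _ hν)
    rw [List.foldr_cons, convM]
    infer_instance

lemma expMoment_foldr_convM (l : List (Measure ℝ)) (hl : ∀ μ ∈ l, SFinite μ) :
    expMoment (l.foldr convM (Measure.dirac 0)) = (l.map expMoment).prod := by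
  induction l with
  | nil => simp [expMoment, lintegral_dirac' _ measurable_ofReal_exp]
  | cons μ l ih =>
    have hl' : ∀ ν ∈ l, SFinite ν := fun ν hν => hl ν (List.mem_cons_of_mem _ hν)
    have := hl μ List.mem_cons_self
    have := sFinite_foldr_convM l hl'
    rw [List.foldr_cons, expMoment_convM, ih hl', List.map_cons, List.prod_cons]

lemma one_add_exp_neg_div_two_le {a : ℝ} (h0 : 0 ≤ a) (h1 : a ≤ 1) :
    (1 + Real.exp (-a)) / 2 ≤ Real.exp (-(a / 4)) := by
  -- convexity of `exp` on `[-1, 0]` and `e⁻¹ ≤ 1/2` give `e⁻ᵃ ≤ 1 - a/2`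
  have hconv : Real.exp (-a) ≤ (1 - a) + a * Real.exp (-1) := by
    simpa using convexOn_exp.2 (Set.mem_univ 0) (Set.mem_univ (-1)) (by linarith : 0 ≤ 1 - a)
      h0 (by ring)
  have hinv_e : Real.exp (-1) ≤ 1 / 2 := by
    rw [Real.exp_neg, inv_le_comm₀ (Real.exp_pos 1) (by norm_num)]
    linarith [Real.exp_one_gt_d9]
  have hlin : 1 - a / 4 ≤ Real.exp (-(a / 4)) := by linarith [Real.add_one_le_exp (-(a / 4))]
  nlinarith

lemma expMoment_half_dirac_add_half_dirac (a : ℝ) :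
    expMoment ((1 / 2 : ℝ≥0∞) • Measure.dirac 0 + (1 / 2 : ℝ≥0∞) • Measure.dirac (-a)) =
      ENNReal.ofReal ((1 + Real.exp (-a)) / 2) := by
  rw [expMoment, lintegral_add_measure, lintegral_smul_measure, lintegral_smul_measure,
    lintegral_dirac' _ measurable_ofReal_exp, lintegral_dirac' _ measurable_ofReal_exp,
    ENNReal.ofReal_div_of_pos two_pos, ENNReal.ofReal_add zero_le_one (Real.exp_nonneg _),
    Real.exp_zero, ENNReal.ofReal_one, ENNReal.ofReal_ofNat, ENNReal.add_div]
  simp only [smul_eq_mul, ENNReal.div_eq_inv_mul, mul_one]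

lemma measure_Ici_le_exp_mul_expMoment (μ : Measure ℝ) (c : ℝ) :
    μ (Set.Ici c) ≤ ENNReal.ofReal (Real.exp (-c)) * expMoment μ := by
  have hpoint : ∀ x, (Set.Ici c).indicator 1 x ≤
      ENNReal.ofReal (Real.exp (-c)) * ENNReal.ofReal (Real.exp x) := by
    intro x
    by_cases hx : x ∈ Set.Ici c
    · rw [Set.indicator_of_mem hx, Pi.one_apply, ← ENNReal.ofReal_mul (Real.exp_nonneg _),
        ← Real.exp_add, ENNReal.one_le_ofReal, Real.one_le_exp_iff]
      linarith [Set.mem_Ici.1 hx]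
    · simp [hx]
  calc μ (Set.Ici c) = ∫⁻ x, (Set.Ici c).indicator 1 x ∂μ :=
        (lintegral_indicator_one measurableSet_Ici).symm
    _ ≤ ∫⁻ x, ENNReal.ofReal (Real.exp (-c)) * ENNReal.ofReal (Real.exp x) ∂μ :=
        lintegral_mono hpoint
    _ = ENNReal.ofReal (Real.exp (-c)) * expMoment μ :=
        lintegral_const_mul _ measurable_ofReal_exp

lemma expMoment_foldr_convM_twoPoint_le {N : ℕ} (a : Fin N → ℝ)
    (ha : ∀ k, 0 ≤ a k ∧ a k ≤ 1) :
    expMoment ((List.ofFn fun k : Fin N =>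
        (1 / 2 : ℝ≥0∞) • Measure.dirac (0 : ℝ) + (1 / 2 : ℝ≥0∞) • Measure.dirac (-(a k))).foldr
        convM (Measure.dirac 0)) ≤ ENNReal.ofReal (Real.exp (-((∑ k, a k) / 4))) := by
  rw [expMoment_foldr_convM _ fun μ hμ => by obtain ⟨k, rfl⟩ := List.mem_ofFn.1 hμ; infer_instance,
    List.map_ofFn, List.prod_ofFn, Finset.sum_div, ← Finset.sum_neg_distrib, Real.exp_sum,
    ENNReal.ofReal_prod_of_nonneg fun _ _ => Real.exp_nonneg _]
  refine Finset.prod_le_prod' fun k _ => ?_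
  rw [Function.comp_apply, expMoment_half_dirac_add_half_dirac]
  exact ENNReal.ofReal_le_ofReal (one_add_exp_neg_div_two_le (ha k).1 (ha k).2)

theorem stmt_6_general (L ε : ℝ) (hε : 0 < ε) :
    ∃ A : ℝ, 0 < A ∧
      ∀ (N : ℕ) (a : Fin N → ℝ), (∀ k, 0 ≤ a k ∧ a k ≤ 1) → A ≤ ∑ k, a k →
        ∀ ν : Measure ℝ,
          ν = (List.ofFn (fun k : Fin N =>
                ((1 : ENNReal) / 2) • Measure.dirac (0 : ℝ) +
                ((1 : ENNReal) / 2) • Measure.dirac (-(a k)))).foldr convM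
              (Measure.dirac (0 : ℝ)) →
          (ν (Set.Icc (-L) 0)).toReal ≤ ε := by
  refine ⟨max 1 (4 * (L - Real.log ε)), lt_max_of_lt_left one_pos, ?_⟩
  intro N a ha hsum ν hν
  have hexponent : L - (∑ k, a k) / 4 ≤ Real.log ε := by
    linarith [le_max_right 1 (4 * (L - Real.log ε))]
  refine ENNReal.toReal_le_of_le_ofReal hε.le ?_
  calc ν (Set.Icc (-L) 0) ≤ ν (Set.Ici (-L)) := measure_mono Set.Icc_subset_Ici_self
    _ ≤ ENNReal.ofReal (Real.exp L) * expMoment ν := by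
        simpa using measure_Ici_le_exp_mul_expMoment ν (-L)
    _ ≤ ENNReal.ofReal (Real.exp L) * ENNReal.ofReal (Real.exp (-((∑ k, a k) / 4))) := by
        rw [hν]; gcongr; exact expMoment_foldr_convM_twoPoint_le a ha
    _ = ENNReal.ofReal (Real.exp (L - (∑ k, a k) / 4)) := by
        rw [← ENNReal.ofReal_mul (Real.exp_nonneg _), ← Real.exp_add, sub_eq_add_neg]
    _ ≤ ENNReal.ofReal ε := ENNReal.ofReal_le_ofReal <| by
        simpa [Real.exp_log hε] using Real.exp_le_exp.2 hexponent

theorem stmt_6 (L ε : ℝ) (hL : 0 < L) (hε : 0 < ε) :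
    ∃ A : ℝ, 0 < A ∧
      ∀ (N : ℕ) (a : Fin N → ℝ), (∀ k, 0 ≤ a k ∧ a k ≤ 1) → A ≤ ∑ k, a k →
        ∀ ν : Measure ℝ,
          ν = (List.ofFn (fun k : Fin N =>
                ((1 : ENNReal) / 2) • Measure.dirac (0 : ℝ) +
                ((1 : ENNReal) / 2) • Measure.dirac (-(a k)))).foldr convM
              (Measure.dirac (0 : ℝ)) →
          (ν (Set.Icc (-L) 0)).toReal ≤ ε :=
  stmt_6_general L ε hε
end

section
/- Let d ≥ 2, ρ, ρ' ∈ ℝ be fixed, and let π_j > 0 be a sequence of measurable functions on (0,∞) (with all integrals below finite and positive). Suppose that for every t₀ > 0, ∫₀^{t₀} e^{-((d-2)²/4)t} π_j(t) t^{-1/2} dt = o(∫_{t₀}^∞ e^{-((d-2)²/4)t} π_j(t) t^{-1/2} dt) as j → ∞. Then the ratio [∫₀^∞ t^{-1/2} e^{-(ρ+(d-2)t)²/(4t)} π_j(t) dt] / [∫₀^∞ t^{-1/2} e^{-(ρ'+(d-2)t)²/(4t)} π_j(t) dt] converges to e^{-((d-2)/2)(ρ - ρ')} as j → ∞. -/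
/-! With `c = d - 2`, the identity
`exp (-(σ + c t)² / (4t)) = exp (-cσ/2) · exp (-σ² / (4t)) · exp (-c² t / 4)`
writes the `σ`-integral as `exp (-cσ/2) ∫ exp (-σ² / (4t)) w_j` for the common weight
`w_j t = exp (-c² t / 4) π_j(t) / √t`. The little-o hypothesis says that the mass of `w_j`
escapes to `t = ∞`, where `exp (-σ² / (4t)) → 1`; hence `∫ exp (-σ² / (4t)) w_j / ∫ w_j → 1`
for every `σ`, and the ratio of the `ρ`- and `ρ'`-integrals tends to `exp (-c (ρ - ρ') / 2)`. -/

open MeasureTheory Real Filter Set Topology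

theorem tendsto_div_add_of_tendsto_div {ι : Type*} {l : Filter ι} {b c : ι → ℝ}
    (hb : ∀ j, 0 ≤ b j) (hc : ∀ j, 0 < c j) (h : Tendsto (fun j => b j / c j) l (𝓝 0)) :
    Tendsto (fun j => b j / (b j + c j)) l (𝓝 0) :=
  squeeze_zero (fun j => div_nonneg (hb j) (add_pos_of_nonneg_of_pos (hb j) (hc j)).le)
    (fun j => div_le_div_of_nonneg_left (hb j) (hc j) (le_add_of_nonneg_left (hb j))) h

theorem setIntegral_Ioi_pos {f : ℝ → ℝ} {a : ℝ} (hf : ∀ t, a < t → 0 < f t)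
    (hint : IntegrableOn f (Ioi a)) : 0 < ∫ t in Ioi a, f t := by
  refine (setIntegral_pos_iff_support_of_nonneg_ae
    ((ae_restrict_iff' measurableSet_Ioi).2 (.of_forall fun t ht => (hf t ht).le)) hint).2 ?_
  have : Ioi a ⊆ Function.support f ∩ Ioi a := fun t ht => ⟨(hf t ht).ne', ht⟩
  exact (measure_mono this).trans_lt' (by simp)

theorem tendsto_setIntegral_Ioc_div_of_tendsto_div {ι : Type*} {l : Filter ι} {w : ι → ℝ → ℝ}
    (hw : ∀ j t, 0 < t → 0 < w j t) (hw_int : ∀ j, IntegrableOn (w j) (Ioi 0)) {t₀ : ℝ}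
    (ht₀ : 0 < t₀)
    (h : Tendsto (fun j => (∫ t in Ioc 0 t₀, w j t) / ∫ t in Ioi t₀, w j t) l (𝓝 0)) :
    Tendsto (fun j => (∫ t in Ioc 0 t₀, w j t) / ∫ t in Ioi 0, w j t) l (𝓝 0) := by
  have hsplit : ∀ j, ∫ t in Ioi 0, w j t = (∫ t in Ioc 0 t₀, w j t) + ∫ t in Ioi t₀, w j t :=
    fun j => by
      rw [← setIntegral_union Ioc_disjoint_Ioi_same measurableSet_Ioi
        ((hw_int j).mono_set Ioc_subset_Ioi_self) ((hw_int j).mono_set (Ioi_subset_Ioi ht₀.le)),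
        Ioc_union_Ioi_eq_Ioi ht₀.le]
  simp only [hsplit]
  exact tendsto_div_add_of_tendsto_div
    (fun j => setIntegral_nonneg measurableSet_Ioc fun t ht => (hw j t ht.1).le)
    (fun j => setIntegral_Ioi_pos (fun t ht => hw j t (ht₀.trans ht))
      ((hw_int j).mono_set (Ioi_subset_Ioi ht₀.le)))
    h

section Concentration

variable {μ : Measure ℝ} {φ : ℝ → ℝ} {L M : ℝ}

theorem abs_setIntegral_mul_sub_le {w : ℝ → ℝ} {ε t₀ : ℝ} (hw : ∀ t, 0 < t → 0 ≤ w t)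
    (hw_int : IntegrableOn w (Ioi 0) μ) (hφ : AEStronglyMeasurable φ μ)
    (hM : ∀ t, 0 < t → |φ t - L| ≤ M) (ht₀ : 0 ≤ t₀) (hε : ∀ t, t₀ < t → |φ t - L| ≤ ε) :
    |∫ t in Ioi 0, φ t * w t ∂μ - L * ∫ t in Ioi 0, w t ∂μ| ≤
      M * (∫ t in Ioc 0 t₀, w t ∂μ) + ε * ∫ t in Ioi 0, w t ∂μ := by
  set g : ℝ → ℝ := fun t => (φ t - L) * w t
  have hg_int : IntegrableOn g (Ioi 0) μ :=
    hw_int.bdd_mul (c := M) (hφ.sub aestronglyMeasurable_const).restrict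
      ((ae_restrict_iff' measurableSet_Ioi).2 (.of_forall hM))
  have hφw_int : IntegrableOn (fun t => φ t * w t) (Ioi 0) μ :=
    (hg_int.add (hw_int.const_mul L)).congr_fun
      (fun t _ => by simp only [g, Pi.add_apply]; ring) measurableSet_Ioi
  have hsplit : ∫ t in Ioi 0, φ t * w t ∂μ - L * ∫ t in Ioi 0, w t ∂μ =
      (∫ t in Ioc 0 t₀, g t ∂μ) + ∫ t in Ioi t₀, g t ∂μ := by
    rw [← setIntegral_union Ioc_disjoint_Ioi_same measurableSet_Ioi
      (hg_int.mono_set Ioc_subset_Ioi_self) (hg_int.mono_set (Ioi_subset_Ioi ht₀)),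
      Ioc_union_Ioi_eq_Ioi ht₀, ← integral_const_mul, ← integral_sub hφw_int
      (hw_int.const_mul L)]
    congr 1 with t
    ring
  have hlow : ‖∫ t in Ioc 0 t₀, g t ∂μ‖ ≤ M * ∫ t in Ioc 0 t₀, w t ∂μ := by
    rw [← integral_const_mul]
    refine norm_integral_le_of_norm_le ((hw_int.mono_set Ioc_subset_Ioi_self).const_mul M)
      ((ae_restrict_iff' measurableSet_Ioc).2 (.of_forall fun t ht => ?_))
    rw [Real.norm_eq_abs, abs_mul, abs_of_nonneg (hw t ht.1)]
    exact mul_le_mul_of_nonneg_right (hM t ht.1) (hw t ht.1)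
  have hhigh : ‖∫ t in Ioi t₀, g t ∂μ‖ ≤ ε * ∫ t in Ioi t₀, w t ∂μ := by
    rw [← integral_const_mul]
    refine norm_integral_le_of_norm_le ((hw_int.mono_set (Ioi_subset_Ioi ht₀)).const_mul ε)
      ((ae_restrict_iff' measurableSet_Ioi).2 (.of_forall fun t ht => ?_))
    have ht : 0 < t := ht₀.trans_lt ht
    rw [Real.norm_eq_abs, abs_mul, abs_of_nonneg (hw t ht)]
    exact mul_le_mul_of_nonneg_right (hε t ‹_›) (hw t ht)
  have htail : ε * ∫ t in Ioi t₀, w t ∂μ ≤ ε * ∫ t in Ioi 0, w t ∂μ := by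
    refine mul_le_mul_of_nonneg_left (setIntegral_mono_set hw_int
      ((ae_restrict_iff' measurableSet_Ioi).2 (.of_forall fun t ht => hw t ht))
      (Ioi_subset_Ioi ht₀).eventuallyLE) ((abs_nonneg _).trans (hε (t₀ + 1) (by linarith)))
  rw [hsplit, ← Real.norm_eq_abs]
  exact (norm_add_le _ _).trans (add_le_add hlow (hhigh.trans htail))

theorem tendsto_setIntegral_mul_div_of_concentrated {ι : Type*} {l : Filter ι}
    {w : ι → ℝ → ℝ} (hw : ∀ j t, 0 < t → 0 ≤ w j t) (hw_int : ∀ j, IntegrableOn (w j) (Ioi 0) μ)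
    (hA : ∀ j, 0 < ∫ t in Ioi 0, w j t ∂μ)
    (hconc : ∀ t₀, 0 < t₀ →
      Tendsto (fun j => (∫ t in Ioc 0 t₀, w j t ∂μ) / ∫ t in Ioi 0, w j t ∂μ) l (𝓝 0))
    (hφ : AEStronglyMeasurable φ μ) (hM : ∀ t, 0 < t → |φ t - L| ≤ M)
    (hφL : Tendsto φ atTop (𝓝 L)) :
    Tendsto (fun j => (∫ t in Ioi 0, φ t * w j t ∂μ) / ∫ t in Ioi 0, w j t ∂μ) l (𝓝 L) := by
  rw [Metric.tendsto_nhds]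
  intro ε hε
  obtain ⟨t₁, ht₁⟩ :=
    eventually_atTop.1 (hφL.eventually (Metric.closedBall_mem_nhds L (half_pos hε)))
  have ht₀ : (0 : ℝ) < max t₁ 1 := lt_max_of_lt_right one_pos
  have hsmall := (hconc _ ht₀).const_mul M
  rw [mul_zero] at hsmall
  filter_upwards [hsmall.eventually (gt_mem_nhds (half_pos hε))] with j hj
  have hAj := hA j
  calc dist ((∫ t in Ioi 0, φ t * w j t ∂μ) / ∫ t in Ioi 0, w j t ∂μ) L
      = |∫ t in Ioi 0, φ t * w j t ∂μ - L * ∫ t in Ioi 0, w j t ∂μ| / ∫ t in Ioi 0, w j t ∂μ := by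
        rw [Real.dist_eq, div_sub' hAj.ne', abs_div, abs_of_pos hAj, mul_comm]
    _ ≤ (M * (∫ t in Ioc 0 (max t₁ 1), w j t ∂μ) + ε / 2 * ∫ t in Ioi 0, w j t ∂μ) /
          ∫ t in Ioi 0, w j t ∂μ := by
        gcongr
        exact abs_setIntegral_mul_sub_le (hw j) (hw_int j) hφ hM ht₀.le
          fun t ht => ht₁ t ((le_max_left _ _).trans ht.le)
    _ = M * ((∫ t in Ioc 0 (max t₁ 1), w j t ∂μ) / ∫ t in Ioi 0, w j t ∂μ) + ε / 2 := by
        field_simp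
    _ < ε := by linarith

end Concentration

theorem exp_neg_sq_add_mul_div (c σ t : ℝ) (ht : t ≠ 0) :
    exp (-(σ + c * t) ^ 2 / (4 * t)) =
      exp (-(c / 2 * σ)) * (exp (-σ ^ 2 / (4 * t)) * exp (-(c ^ 2 / 4) * t)) := by
  rw [← exp_add, ← exp_add]
  congr 1
  field_simp
  ring

theorem tendsto_exp_neg_sq_div_atTop (σ : ℝ) :
    Tendsto (fun t => exp (-σ ^ 2 / (4 * t))) atTop (𝓝 1) := by
  have h : Tendsto (fun t : ℝ => -σ ^ 2 / (4 * t)) atTop (𝓝 0) :=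
    tendsto_const_nhds.div_atTop (tendsto_id.const_mul_atTop four_pos)
  simpa using h.rexp

theorem abs_exp_neg_sq_div_sub_one_le (σ : ℝ) {t : ℝ} (ht : 0 < t) :
    |exp (-σ ^ 2 / (4 * t)) - 1| ≤ 1 := by
  have hle : exp (-σ ^ 2 / (4 * t)) ≤ 1 := exp_le_one_iff.2 (by
    rw [neg_div]; exact neg_nonpos.2 (by positivity))
  rw [abs_sub_comm, abs_of_nonneg (sub_nonneg.2 hle)]
  linarith [exp_pos (-σ ^ 2 / (4 * t))]

theorem tendsto_setIntegral_exp_sq_div {ι : Type*} {l : Filter ι} {c : ℝ} {f : ι → ℝ → ℝ}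
    (hf : ∀ j t, 0 < t → 0 ≤ f j t)
    (hf_int : ∀ j, IntegrableOn (fun t => exp (-(c ^ 2 / 4) * t) * f j t) (Ioi 0))
    (hA : ∀ j, 0 < ∫ t in Ioi 0, exp (-(c ^ 2 / 4) * t) * f j t)
    (hconc : ∀ t₀, 0 < t₀ → Tendsto (fun j => (∫ t in Ioc 0 t₀, exp (-(c ^ 2 / 4) * t) * f j t) /
      ∫ t in Ioi 0, exp (-(c ^ 2 / 4) * t) * f j t) l (𝓝 0)) (σ : ℝ) :
    Tendsto (fun j => (∫ t in Ioi 0, exp (-(σ + c * t) ^ 2 / (4 * t)) * f j t) /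
      ∫ t in Ioi 0, exp (-(c ^ 2 / 4) * t) * f j t) l (𝓝 (exp (-(c / 2 * σ)))) := by
  have hfactor : ∀ j, ∫ t in Ioi 0, exp (-(σ + c * t) ^ 2 / (4 * t)) * f j t =
      exp (-(c / 2 * σ)) *
        ∫ t in Ioi 0, exp (-σ ^ 2 / (4 * t)) * (exp (-(c ^ 2 / 4) * t) * f j t) := by
    intro j
    rw [← integral_const_mul]
    refine setIntegral_congr_fun measurableSet_Ioi fun t ht => ?_
    rw [exp_neg_sq_add_mul_div c σ t (ne_of_gt ht)]
    ring
  simp_rw [hfactor, mul_div_assoc]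
  simpa using (tendsto_setIntegral_mul_div_of_concentrated
    (fun j t ht => mul_nonneg (exp_pos _).le (hf j t ht)) hf_int hA hconc
    (by fun_prop : Measurable fun t : ℝ => exp (-σ ^ 2 / (4 * t))).aestronglyMeasurable
    (fun t ht => abs_exp_neg_sq_div_sub_one_le σ ht) (tendsto_exp_neg_sq_div_atTop σ)).const_mul
    (exp (-(c / 2 * σ)))

theorem stmt_10_general (d : ℕ) (ρ ρ' : ℝ) (pik : ℕ → ℝ → ℝ)
    (hpos : ∀ j t, 0 < t → 0 < pik j t)
    (hfin : ∀ j (σ : ℝ),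
      0 < ∫ t in Set.Ioi (0 : ℝ),
            Real.exp (-(σ + ((d : ℝ) - 2) * t) ^ 2 / (4 * t)) * pik j t / Real.sqrt t ∧
      IntegrableOn
        (fun t => Real.exp (-(σ + ((d : ℝ) - 2) * t) ^ 2 / (4 * t)) * pik j t / Real.sqrt t)
        (Set.Ioi (0 : ℝ)))
    (hlittleo : ∀ t₀ : ℝ, 0 < t₀ →
      Tendsto (fun j =>
          (∫ t in Set.Ioc (0 : ℝ) t₀,
              Real.exp (-(((d : ℝ) - 2) ^ 2 / 4) * t) * pik j t / Real.sqrt t) /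
          (∫ t in Set.Ioi t₀,
              Real.exp (-(((d : ℝ) - 2) ^ 2 / 4) * t) * pik j t / Real.sqrt t))
        atTop (nhds 0)) :
    Tendsto (fun j =>
        (∫ t in Set.Ioi (0 : ℝ),
            Real.exp (-(ρ + ((d : ℝ) - 2) * t) ^ 2 / (4 * t)) * pik j t / Real.sqrt t) /
        (∫ t in Set.Ioi (0 : ℝ),
            Real.exp (-(ρ' + ((d : ℝ) - 2) * t) ^ 2 / (4 * t)) * pik j t / Real.sqrt t))
      atTop (nhds (Real.exp (-(((d : ℝ) - 2) / 2) * (ρ - ρ')))) := by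
  set c : ℝ := (d : ℝ) - 2
  simp only [mul_div_assoc] at hfin hlittleo ⊢
  set f : ℕ → ℝ → ℝ := fun j t => pik j t / √t
  have hexp_zero : ∀ t, -(0 + c * t) ^ 2 / (4 * t) = -(c ^ 2 / 4) * t := by
    intro t
    rcases eq_or_ne t 0 with rfl | ht
    · simp
    · field_simp
      ring
  have hf_pos : ∀ j t, 0 < t → 0 < f j t := fun j t ht => div_pos (hpos j t ht) (sqrt_pos.2 ht)
  have hw_pos : ∀ j t, 0 < t → 0 < exp (-(c ^ 2 / 4) * t) * f j t := fun j t ht =>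
    mul_pos (exp_pos _) (hf_pos j t ht)
  have hw_int : ∀ j, IntegrableOn (fun t => exp (-(c ^ 2 / 4) * t) * f j t) (Ioi 0) := fun j => by
    simpa only [hexp_zero] using (hfin j 0).2
  have hA : ∀ j, 0 < ∫ t in Ioi 0, exp (-(c ^ 2 / 4) * t) * f j t := fun j => by
    simpa only [hexp_zero] using (hfin j 0).1
  have hf := fun j t ht => (hf_pos j t ht).le
  have hconc t₀ (ht₀ : 0 < t₀) :=
    tendsto_setIntegral_Ioc_div_of_tendsto_div hw_pos hw_int ht₀ (hlittleo t₀ ht₀)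
  have hratio := (tendsto_setIntegral_exp_sq_div hf hw_int hA hconc ρ).div
    (tendsto_setIntegral_exp_sq_div hf hw_int hA hconc ρ') (exp_ne_zero _)
  rw [show -(c / 2) * (ρ - ρ') = -(c / 2 * ρ) - -(c / 2 * ρ') by ring, exp_sub]
  exact hratio.congr fun j => div_div_div_cancel_right₀ (hA j).ne' _ _

theorem stmt_10 (d : ℕ) (hd : 2 ≤ d) (ρ ρ' : ℝ) (pik : ℕ → ℝ → ℝ)
    (hmeas : ∀ j, Measurable (pik j)) (hpos : ∀ j t, 0 < t → 0 < pik j t)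
    (hfin : ∀ j (σ : ℝ),
      0 < ∫ t in Set.Ioi (0 : ℝ),
            Real.exp (-(σ + ((d : ℝ) - 2) * t) ^ 2 / (4 * t)) * pik j t / Real.sqrt t ∧
      IntegrableOn
        (fun t => Real.exp (-(σ + ((d : ℝ) - 2) * t) ^ 2 / (4 * t)) * pik j t / Real.sqrt t)
        (Set.Ioi (0 : ℝ)))
    (hlittleo : ∀ t₀ : ℝ, 0 < t₀ →
      Tendsto (fun j =>
          (∫ t in Set.Ioc (0 : ℝ) t₀,
              Real.exp (-(((d : ℝ) - 2) ^ 2 / 4) * t) * pik j t / Real.sqrt t) /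
          (∫ t in Set.Ioi t₀,
              Real.exp (-(((d : ℝ) - 2) ^ 2 / 4) * t) * pik j t / Real.sqrt t))
        atTop (nhds 0)) :
    Tendsto (fun j =>
        (∫ t in Set.Ioi (0 : ℝ),
            Real.exp (-(ρ + ((d : ℝ) - 2) * t) ^ 2 / (4 * t)) * pik j t / Real.sqrt t) /
        (∫ t in Set.Ioi (0 : ℝ),
            Real.exp (-(ρ' + ((d : ℝ) - 2) * t) ^ 2 / (4 * t)) * pik j t / Real.sqrt t))
      atTop (nhds (Real.exp (-(((d : ℝ) - 2) / 2) * (ρ - ρ')))) :=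
  stmt_10_general d ρ ρ' pik hpos hfin hlittleo
end
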